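/- arXiv:1208.6212 — 3 statements merged into one kernel-verified Lean document; each statement's English description precedes it below -/
import Mathlib

section
/- Let L : ℝⁿ × ℝⁿ → ℝ, L = L(x,q), be jointly continuous, with L(x,·) convex and differentiable for each x, and suppose |D_q L(x,q)| ≤ C(|q| + 1) for all x, q. Let γ_k, γ : [−1,0] → ℝⁿ be absolutely continuous with γ_k → γ uniformly and γ̇_k ⇀ γ̇ weakly in L²((−1,0), ℝⁿ). Then ∫_{−1}^0 L(γ(s), γ̇(s)) ds ≤ liminf_{k→∞} ∫_{−1}^0 L(γ_k(s), γ̇_k(s)) ds. -/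
open MeasureTheory Filter Gradient
open scoped RealInnerProductSpace

set_option linter.unusedSectionVars false
set_option maxHeartbeats 1000000

section Aux

variable {F : Type*} [NormedAddCommGroup F] [InnerProductSpace ℝ F] [CompleteSpace F]

lemma inner_gradient_eq (f : F → ℝ) (x v : F) : ⟪∇ f x, v⟫ = fderiv ℝ f x v :=
  InnerProductSpace.toDual_symm_apply

lemma norm_gradient_eq (f : F → ℝ) (x : F) : ‖∇ f x‖ = ‖fderiv ℝ f x‖ :=
  LinearIsometryEquiv.norm_map _ _

lemma hasDerivAt_line {f : F → ℝ} (hdiff : Differentiable ℝ f) (x v : F) (t : ℝ) :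
    HasDerivAt (fun t : ℝ => f (x + t • v)) (fderiv ℝ f (x + t • v) v) t := by
  have hc : HasDerivAt (fun t : ℝ => x + t • v) v t := by
    simpa using ((hasDerivAt_id t).smul_const v).const_add x
  exact ((hdiff (x + t • v)).hasFDerivAt.comp_hasDerivAt t hc)

lemma convexOn_line {f : F → ℝ} (hconv : ConvexOn ℝ Set.univ f) (x v : F) :
    ConvexOn ℝ Set.univ (fun t : ℝ => f (x + t • v)) := by
  have A : ConvexOn ℝ ((AffineMap.lineMap x (x + v) : ℝ →ᵃ[ℝ] F) ⁻¹' Set.univ)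
      (f ∘ (AffineMap.lineMap x (x + v) : ℝ →ᵃ[ℝ] F)) := hconv.comp_affineMap _
  simp only [Set.preimage_univ] at A
  convert A using 1
  funext t
  simp [AffineMap.lineMap_apply, Function.comp]
  rw [add_comm]

/-- supporting hyperplane inequality for a differentiable convex function -/
lemma convex_support_ineq {f : F → ℝ} (hconv : ConvexOn ℝ Set.univ f)
    (hdiff : Differentiable ℝ f) (x v : F) :
    f x + ⟪∇ f x, v⟫ ≤ f (x + v) := by
  have hline := convexOn_line hconv x v
  have hder : HasDerivAt (fun t : ℝ => f (x + t • v)) (fderiv ℝ f x v) 0 := by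
    simpa using hasDerivAt_line hdiff x v 0
  have := hline.le_slope_of_hasDerivAt (Set.mem_univ (0:ℝ)) (Set.mem_univ (1:ℝ))
    zero_lt_one hder
  rw [slope_def_field] at this
  simp only [one_smul, zero_smul, add_zero, sub_zero, div_one] at this
  rw [inner_gradient_eq]
  linarith

/-- uniqueness of the supporting slope -/
lemma subgradient_eq_gradient {f : F → ℝ} (hdiff : Differentiable ℝ f) {x p : F}
    (h : ∀ v, f x + ⟪p, v⟫ ≤ f (x + v)) : p = ∇ f x := by
  set w := p - ∇ f x with hw
  have hkey : ⟪p, w⟫ ≤ ⟪∇ f x, w⟫ := by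
    have hder : HasDerivAt (fun t : ℝ => f (x + t • w)) (fderiv ℝ f x w) 0 := by
      simpa using hasDerivAt_line hdiff x w 0
    have hslope : Tendsto (slope (fun t : ℝ => f (x + t • w)) 0) (nhdsWithin 0 (Set.Ioi 0))
        (nhds (fderiv ℝ f x w)) := by
      refine (hasDerivAt_iff_tendsto_slope.mp hder).mono_left (nhdsWithin_mono 0 ?_)
      intro t ht
      exact ne_of_gt ht
    have hev : ∀ᶠ t in nhdsWithin (0:ℝ) (Set.Ioi 0),
        ⟪p, w⟫ ≤ slope (fun t : ℝ => f (x + t • w)) 0 t := by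
      filter_upwards [self_mem_nhdsWithin] with t ht
      have h1 : f x + t * ⟪p, w⟫ ≤ f (x + t • w) := by
        have := h (t • w)
        rwa [real_inner_smul_right] at this
      rw [slope_def_field]
      simp only [zero_smul, add_zero, sub_zero]
      rw [le_div_iff₀ (by exact ht)]
      linarith
    have := ge_of_tendsto hslope hev
    rwa [← inner_gradient_eq] at this
  have h0 : ⟪w, w⟫ ≤ 0 := by
    have : ⟪p - ∇ f x, w⟫ ≤ 0 := by rw [inner_sub_left]; linarith
    rwa [← hw] at this
  have hsq : ‖w‖ ^ 2 ≤ 0 := by rwa [real_inner_self_eq_norm_sq] at h0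
  have hwz : w = 0 := by
    have := norm_nonneg w
    have h2 : ‖w‖ = 0 := by nlinarith
    exact norm_eq_zero.mp h2
  rw [hw] at hwz
  exact sub_eq_zero.mp hwz

lemma measurable_joint_gradient {n : ℕ}
    (L : EuclideanSpace ℝ (Fin n) → EuclideanSpace ℝ (Fin n) → ℝ)
    (hLcont : Continuous fun p : EuclideanSpace ℝ (Fin n) × EuclideanSpace ℝ (Fin n) => L p.1 p.2)
    (hLdiff : ∀ x, Differentiable ℝ (L x)) :
    Measurable (fun p : EuclideanSpace ℝ (Fin n) × EuclideanSpace ℝ (Fin n) => ∇ (L p.1) p.2) := by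
  have hrepr : ∀ p : EuclideanSpace ℝ (Fin n) × EuclideanSpace ℝ (Fin n),
      ∇ (L p.1) p.2 = ∑ i, (fderiv ℝ (L p.1) p.2 ((EuclideanSpace.basisFun (Fin n) ℝ) i)) •
        (EuclideanSpace.basisFun (Fin n) ℝ) i := by
    intro p
    conv_lhs => rw [← (EuclideanSpace.basisFun (Fin n) ℝ).sum_repr (∇ (L p.1) p.2)]
    congr 1
    funext i
    rw [(EuclideanSpace.basisFun (Fin n) ℝ).repr_apply_apply, real_inner_comm]
    rw [show ⟪∇ (L p.1) p.2, (EuclideanSpace.basisFun (Fin n) ℝ) i⟫ =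
      fderiv ℝ (L p.1) p.2 ((EuclideanSpace.basisFun (Fin n) ℝ) i) from
      InnerProductSpace.toDual_symm_apply]
  have hmeas : ∀ v : EuclideanSpace ℝ (Fin n),
      Measurable fun p : EuclideanSpace ℝ (Fin n) × EuclideanSpace ℝ (Fin n) =>
        fderiv ℝ (L p.1) p.2 v := by
    intro v
    have hder : ∀ p : EuclideanSpace ℝ (Fin n) × EuclideanSpace ℝ (Fin n), Tendsto
        (fun m : ℕ => (L p.1 (p.2 + (((m:ℝ)+1)⁻¹) • v) - L p.1 p.2) / ((m:ℝ)+1)⁻¹)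
        atTop (nhds (fderiv ℝ (L p.1) p.2 v)) := by
      intro p
      have hline : HasDerivAt (fun t : ℝ => L p.1 (p.2 + t • v)) (fderiv ℝ (L p.1) p.2 v) 0 := by
        have hc : HasDerivAt (fun t : ℝ => p.2 + t • v) v 0 := by
          simpa using ((hasDerivAt_id (0:ℝ)).smul_const v).const_add p.2
        have := ((hLdiff p.1) (p.2 + (0:ℝ) • v)).hasFDerivAt.comp_hasDerivAt 0 hc
        simp only [zero_smul, add_zero] at this
        exact this
      have hslope := hasDerivAt_iff_tendsto_slope.mp hline
      have hseq : Tendsto (fun m : ℕ => ((m:ℝ)+1)⁻¹) atTop (nhdsWithin 0 {(0:ℝ)}ᶜ) := by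
        rw [tendsto_nhdsWithin_iff]
        constructor
        · simpa using tendsto_one_div_add_atTop_nhds_zero_nat (𝕜 := ℝ)
        · filter_upwards with m
          simp only [Set.mem_compl_iff, Set.mem_singleton_iff]
          positivity
      refine (hslope.comp hseq).congr (fun m => ?_)
      simp only [Function.comp_apply]
      rw [slope_def_field]
      simp
    have hcontm : ∀ m : ℕ, Continuous
        (fun p : EuclideanSpace ℝ (Fin n) × EuclideanSpace ℝ (Fin n) =>
          (L p.1 (p.2 + (((m:ℝ)+1)⁻¹) • v) - L p.1 p.2) / ((m:ℝ)+1)⁻¹) := by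
      intro m
      have h1 : Continuous (fun p : EuclideanSpace ℝ (Fin n) × EuclideanSpace ℝ (Fin n) =>
          L p.1 (p.2 + (((m:ℝ)+1)⁻¹) • v)) := by
        have hg : Continuous (fun p : EuclideanSpace ℝ (Fin n) × EuclideanSpace ℝ (Fin n) =>
            (p.1, p.2 + (((m:ℝ)+1)⁻¹) • v)) := by fun_prop
        exact hLcont.comp hg
      exact (h1.sub hLcont).div_const _
    exact measurable_of_tendsto_metrizable
      (fun m => (hcontm m).measurable)
      (tendsto_pi_nhds.mpr hder)
  rw [funext hrepr]
  exact Finset.measurable_sum _ (fun i _ => (hmeas _).smul_const _)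

/-- convergence of gradients of convex functions -/
lemma gradient_tendsto {n : ℕ} {C : ℝ}
    {L : EuclideanSpace ℝ (Fin n) → EuclideanSpace ℝ (Fin n) → ℝ}
    (hLcont : Continuous fun p : EuclideanSpace ℝ (Fin n) × EuclideanSpace ℝ (Fin n) => L p.1 p.2)
    (hLconv : ∀ x, ConvexOn ℝ Set.univ (L x))
    (hLdiff : ∀ x, Differentiable ℝ (L x))
    (hDL : ∀ x q, ‖fderiv ℝ (L x) q‖ ≤ C * (‖q‖ + 1))
    {x : ℕ → EuclideanSpace ℝ (Fin n)} {x₀ : EuclideanSpace ℝ (Fin n)}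
    (hx : Tendsto x atTop (nhds x₀)) (q : EuclideanSpace ℝ (Fin n)) :
    Tendsto (fun k => ∇ (L (x k)) q) atTop (nhds (∇ (L x₀) q)) := by
  apply tendsto_of_subseq_tendsto
  intro ns hns
  have hbdd : ∀ k, (∇ (L (x (ns k))) q) ∈ Metric.closedBall (0 : EuclideanSpace ℝ (Fin n))
      (C * (‖q‖ + 1)) := by
    intro k
    rw [Metric.mem_closedBall, dist_zero_right, norm_gradient_eq]
    exact hDL _ q
  obtain ⟨a, -, φ, hφmono, hφtend⟩ :=
    tendsto_subseq_of_bounded Metric.isBounded_closedBall hbdd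
  have hxsub : Tendsto (fun k => x (ns (φ k))) atTop (nhds x₀) :=
    hx.comp (hns.comp hφmono.tendsto_atTop)
  have ha : a = ∇ (L x₀) q := by
    apply subgradient_eq_gradient (hLdiff x₀)
    intro v
    have hineq : ∀ k, L (x (ns (φ k))) q + ⟪∇ (L (x (ns (φ k)))) q, v⟫ ≤
        L (x (ns (φ k))) (q + v) := fun k =>
      convex_support_ineq (hLconv _) (hLdiff _) q v
    have h1 : Tendsto (fun k => L (x (ns (φ k))) q) atTop (nhds (L x₀ q)) :=
      (hLcont.tendsto _).comp (hxsub.prodMk_nhds tendsto_const_nhds)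
    have h2 : Tendsto (fun k => L (x (ns (φ k))) (q + v)) atTop (nhds (L x₀ (q + v))) :=
      (hLcont.tendsto _).comp (hxsub.prodMk_nhds tendsto_const_nhds)
    have h3 : Tendsto (fun k => ⟪∇ (L (x (ns (φ k)))) q, v⟫) atTop (nhds ⟪a, v⟫) :=
      hφtend.inner tendsto_const_nhds
    exact le_of_tendsto_of_tendsto' (h1.add h3) h2 hineq
  exact ⟨φ, ha ▸ hφtend⟩

variable {α : Type*} [MeasurableSpace α] {μ : Measure α}

lemma integral_inner_toLp {u v : α → F} (hu : MemLp u 2 μ) (hv : MemLp v 2 μ) :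
    ∫ s, ⟪u s, v s⟫ ∂μ = ⟪hu.toLp u, hv.toLp v⟫ := by
  rw [L2.inner_def]
  refine integral_congr_ae ?_
  filter_upwards [hu.coeFn_toLp, hv.coeFn_toLp] with s h1 h2
  rw [h1, h2]

lemma integrable_inner_of_memℒp {u v : α → F} (hu : MemLp u 2 μ) (hv : MemLp v 2 μ) :
    Integrable (fun s => ⟪u s, v s⟫) μ := by
  have := L2.integrable_inner (𝕜 := ℝ) (hu.toLp u) (hv.toLp v)
  refine this.congr ?_
  filter_upwards [hu.coeFn_toLp, hv.coeFn_toLp] with s h1 h2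
  rw [h1, h2]

lemma integrable_mul_of_memℒp {u v : α → ℝ} (hu : MemLp u 2 μ) (hv : MemLp v 2 μ) :
    Integrable (fun s => u s * v s) μ := by
  have := integrable_inner_of_memℒp (F := ℝ) hu hv
  simpa [RCLike.inner_apply, mul_comm] using this

lemma integral_norm_sq_eq_toLp {u : α → F} (hu : MemLp u 2 μ) :
    ∫ s, ‖u s‖ ^ 2 ∂μ = ‖hu.toLp u‖ ^ 2 := by
  rw [← real_inner_self_eq_norm_sq, ← integral_inner_toLp hu hu]
  refine integral_congr_ae (Eventually.of_forall fun s => ?_)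
  simp only
  rw [real_inner_self_eq_norm_sq]

end Aux


theorem stmt_6 (n : ℕ) (C : ℝ)
    (L : EuclideanSpace ℝ (Fin n) → EuclideanSpace ℝ (Fin n) → ℝ)
    (hLcont : Continuous fun p : EuclideanSpace ℝ (Fin n) × EuclideanSpace ℝ (Fin n) => L p.1 p.2)
    (hLconv : ∀ x, ConvexOn ℝ Set.univ (L x))
    (hLdiff : ∀ x, Differentiable ℝ (L x))
    (hDL : ∀ x q, ‖fderiv ℝ (L x) q‖ ≤ C * (‖q‖ + 1))
    -- the curves, given with their a.e. derivatives g k and g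
    (γ : ℕ → ℝ → EuclideanSpace ℝ (Fin n)) (γlim : ℝ → EuclideanSpace ℝ (Fin n))
    (g : ℕ → ℝ → EuclideanSpace ℝ (Fin n)) (glim : ℝ → EuclideanSpace ℝ (Fin n))
    -- absolute continuity: each curve is the integral of its derivative, which is in L²
    (hAC : ∀ k, ∀ t ∈ Set.Icc (-1 : ℝ) 0, γ k t = γ k (-1) + ∫ s in (-1)..t, g k s)
    (hACl : ∀ t ∈ Set.Icc (-1 : ℝ) 0, γlim t = γlim (-1) + ∫ s in (-1)..t, glim s)
    (hg2 : ∀ k, MemLp (g k) 2 (volume.restrict (Set.Ioc (-1 : ℝ) 0)))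
    (hglim2 : MemLp glim 2 (volume.restrict (Set.Ioc (-1 : ℝ) 0)))
    -- uniform convergence of the curves on [-1, 0]
    (hunif : TendstoUniformlyOn γ γlim atTop (Set.Icc (-1 : ℝ) 0))
    -- weak convergence of the derivatives in L²
    (hweak : ∀ φ : ℝ → EuclideanSpace ℝ (Fin n),
      MemLp φ 2 (volume.restrict (Set.Ioc (-1 : ℝ) 0)) →
        Tendsto (fun k => ∫ s in (-1)..0, (inner ℝ (g k s) (φ s) : ℝ)) atTop
          (nhds (∫ s in (-1)..0, (inner ℝ (glim s) (φ s) : ℝ)))) :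
    (∫ s in (-1)..0, L (γlim s) (glim s)) ≤
      liminf (fun k => ∫ s in (-1)..0, L (γ k s) (g k s)) atTop := by
  classical
  have hle : (-1:ℝ) ≤ 0 := by norm_num
  set μ : Measure ℝ := volume.restrict (Set.Ioc (-1 : ℝ) 0) with hμdef
  haveI : IsFiniteMeasure μ := by
    constructor
    rw [hμdef, Measure.restrict_apply_univ, Real.volume_Ioc]
    exact ENNReal.ofReal_lt_top
  have hC : 0 ≤ C := le_trans (norm_nonneg _) (by simpa using hDL 0 0)
  -- convert interval integrals to integrals over μ
  have hconvi : ∀ (G : Type) [inst : NormedAddCommGroup G] [inst2 : NormedSpace ℝ G]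
      (f : ℝ → G), (∫ s in (-1:ℝ)..0, f s) = ∫ s, f s ∂μ := by
    intro G _ _ f
    rw [intervalIntegral.integral_of_le hle]
  rw [hconvi ℝ]
  have hliminf_eq : (fun k => ∫ s in (-1:ℝ)..0, L (γ k s) (g k s)) =
      fun k => ∫ s, L (γ k s) (g k s) ∂μ := funext fun k => hconvi ℝ _
  rw [hliminf_eq]
  -- continuity of the curves on [-1,0]
  have hγc : ∀ (h : ℝ → EuclideanSpace ℝ (Fin n)) (q : ℝ → EuclideanSpace ℝ (Fin n)),
      MemLp q 2 μ → (∀ t ∈ Set.Icc (-1 : ℝ) 0, h t = h (-1) + ∫ s in (-1)..t, q s) →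
      ContinuousOn h (Set.Icc (-1:ℝ) 0) := by
    intro h q hq hac
    have hint : IntervalIntegrable q volume (-1) 0 :=
      (intervalIntegrable_iff_integrableOn_Ioc_of_le hle).mpr (hq.integrable one_le_two)
    have hprim := intervalIntegral.continuousOn_primitive_interval' hint
      (Set.left_mem_uIcc (a := (-1:ℝ)) (b := 0))
    rw [Set.uIcc_of_le hle] at hprim
    exact (continuousOn_const.add hprim).congr hac
  have hγlimcont : ContinuousOn γlim (Set.Icc (-1:ℝ) 0) := hγc γlim glim hglim2 hACl
  have hγcont : ∀ k, ContinuousOn (γ k) (Set.Icc (-1:ℝ) 0) := fun k => hγc (γ k) (g k) (hg2 k) (hAC k)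
  have hγlimmeas : AEStronglyMeasurable γlim μ :=
    (hγlimcont.mono Set.Ioc_subset_Icc_self).aestronglyMeasurable measurableSet_Ioc
  have hγmeas : ∀ k, AEStronglyMeasurable (γ k) μ := fun k =>
    ((hγcont k).mono Set.Ioc_subset_Icc_self).aestronglyMeasurable measurableSet_Ioc
  -- the gradient functions
  have hGmeas := measurable_joint_gradient L hLcont hLdiff
  set ψ : ℝ → EuclideanSpace ℝ (Fin n) := fun s => ∇ (L (γlim s)) (glim s) with hψdef
  set Ψ : ℕ → ℝ → EuclideanSpace ℝ (Fin n) := fun k s => ∇ (L (γ k s)) (glim s) with hΨdef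
  have hψmeas : AEStronglyMeasurable ψ μ :=
    (hGmeas.comp_aemeasurable ((hγlimmeas.aemeasurable).prodMk hglim2.1.aemeasurable)).aestronglyMeasurable
  have hΨmeas : ∀ k, AEStronglyMeasurable (Ψ k) μ := fun k =>
    (hGmeas.comp_aemeasurable (((hγmeas k).aemeasurable).prodMk hglim2.1.aemeasurable)).aestronglyMeasurable
  have hdom : MemLp (fun s => C * (‖glim s‖ + 1)) 2 μ :=
    (hglim2.norm.add (memLp_const 1)).const_mul C
  have hgradbd : ∀ (x : EuclideanSpace ℝ (Fin n)) (q : EuclideanSpace ℝ (Fin n)),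
      ‖∇ (L x) q‖ ≤ C * (‖q‖ + 1) := by
    intro x q
    rw [norm_gradient_eq]
    exact hDL x q
  have hψ2 : MemLp ψ 2 μ := by
    refine hdom.of_le hψmeas (Eventually.of_forall fun s => ?_)
    exact (hgradbd _ _).trans (le_abs_self _)
  have hΨ2 : ∀ k, MemLp (Ψ k) 2 μ := by
    intro k
    refine hdom.of_le (hΨmeas k) (Eventually.of_forall fun s => ?_)
    exact (hgradbd _ _).trans (le_abs_self _)
  -- pointwise bound for L
  have hLle : ∀ (R B : ℝ) (x q : EuclideanSpace ℝ (Fin n)), ‖x‖ ≤ R →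
      (∀ y ∈ Metric.closedBall (0 : EuclideanSpace ℝ (Fin n)) R, ‖L y 0‖ ≤ B) →
      ‖L x q‖ ≤ B + C * (‖q‖ + 1) * ‖q‖ := by
    intro R B x q hx hB
    have h1 : ‖L x q - L x 0‖ ≤ C * (‖q‖ + 1) * ‖q - 0‖ := by
      refine (convex_closedBall (0 : EuclideanSpace ℝ (Fin n)) ‖q‖).norm_image_sub_le_of_norm_fderiv_le
        (fun w _ => (hLdiff x w)) (fun w hw => ?_) ?_ ?_
      · refine (hDL x w).trans ?_
        have hwn : ‖w‖ ≤ ‖q‖ := by simpa using Metric.mem_closedBall.mp hw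
        nlinarith
      · simpa using norm_nonneg q
      · simp [Metric.mem_closedBall]
    have h2 : ‖L x 0‖ ≤ B := hB x (by simpa [Metric.mem_closedBall] using hx)
    have h3 : ‖L x q‖ ≤ ‖L x 0‖ + ‖L x q - L x 0‖ := by
      have := norm_add_le (L x 0) (L x q - L x 0)
      simpa using this
    rw [sub_zero] at h1
    linarith
  -- integrability of compositions
  have hIntL : ∀ (x q : ℝ → EuclideanSpace ℝ (Fin n)), AEStronglyMeasurable x μ → MemLp q 2 μ →
      ∀ (R B : ℝ), (∀ᵐ s ∂μ, ‖x s‖ ≤ R) →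
      (∀ y ∈ Metric.closedBall (0 : EuclideanSpace ℝ (Fin n)) R, ‖L y 0‖ ≤ B) →
      Integrable (fun s => L (x s) (q s)) μ := by
    intro x q hx hq R B hR hB
    have hbd : Integrable (fun s => B + C * (‖q s‖ + 1) * ‖q s‖) μ := by
      refine (integrable_const B).add ?_
      exact integrable_mul_of_memℒp ((hq.norm.add (memLp_const 1)).const_mul C) hq.norm
    refine hbd.mono' (hLcont.comp_aestronglyMeasurable (hx.prodMk hq.1)) ?_
    filter_upwards [hR] with s hs
    exact hLle R B (x s) (q s) hs hB
  obtain ⟨M, hM⟩ := isCompact_Icc.exists_bound_of_continuousOn hγlimcont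
  have hL0cont : Continuous (fun y : EuclideanSpace ℝ (Fin n) => L y 0) :=
    hLcont.comp (continuous_id.prodMk continuous_const)
  obtain ⟨B, hB⟩ := (isCompact_closedBall (0 : EuclideanSpace ℝ (Fin n)) (M+1)).exists_bound_of_continuousOn
    hL0cont.continuousOn
  have hmem_ae : ∀ᵐ s ∂μ, s ∈ Set.Ioc (-1:ℝ) 0 := ae_restrict_mem measurableSet_Ioc
  have hγlim_bd : ∀ᵐ s ∂μ, ‖γlim s‖ ≤ M + 1 := by
    filter_upwards [hmem_ae] with s hs
    exact (hM s (Set.Ioc_subset_Icc_self hs)).trans (by linarith)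
  have hIlim : Integrable (fun s => L (γlim s) (glim s)) μ :=
    hIntL γlim glim hγlimmeas hglim2 (M+1) B hγlim_bd hB
  have hI1 : ∀ k, Integrable (fun s => L (γ k s) (g k s)) μ := by
    intro k
    obtain ⟨Mk, hMk⟩ := isCompact_Icc.exists_bound_of_continuousOn (hγcont k)
    obtain ⟨Bk, hBk⟩ := (isCompact_closedBall (0 : EuclideanSpace ℝ (Fin n)) Mk).exists_bound_of_continuousOn
      hL0cont.continuousOn
    refine hIntL (γ k) (g k) (hγmeas k) (hg2 k) Mk Bk ?_ hBk
    filter_upwards [hmem_ae] with s hs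
    exact hMk s (Set.Ioc_subset_Icc_self hs)
  have hI2 : ∀ k, Integrable (fun s => L (γ k s) (glim s)) μ := by
    intro k
    obtain ⟨Mk, hMk⟩ := isCompact_Icc.exists_bound_of_continuousOn (hγcont k)
    obtain ⟨Bk, hBk⟩ := (isCompact_closedBall (0 : EuclideanSpace ℝ (Fin n)) Mk).exists_bound_of_continuousOn
      hL0cont.continuousOn
    refine hIntL (γ k) glim (hγmeas k) hglim2 Mk Bk ?_ hBk
    filter_upwards [hmem_ae] with s hs
    exact hMk s (Set.Ioc_subset_Icc_self hs)
  have hI3 : ∀ k, Integrable (fun s => ⟪g k s - glim s, Ψ k s⟫) μ := fun k =>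
    integrable_inner_of_memℒp ((hg2 k).sub hglim2) (hΨ2 k)
  have hI3' : ∀ k, Integrable (fun s => ⟪g k s - glim s, Ψ k s - ψ s⟫) μ := fun k =>
    integrable_inner_of_memℒp ((hg2 k).sub hglim2) ((hΨ2 k).sub hψ2)
  have hI3'' : ∀ k, Integrable (fun s => ⟪g k s - glim s, ψ s⟫) μ := fun k =>
    integrable_inner_of_memℒp ((hg2 k).sub hglim2) hψ2
  -- the key convexity inequality
  have hkey : ∀ k s, L (γ k s) (glim s) + ⟪g k s - glim s, Ψ k s⟫ ≤ L (γ k s) (g k s) := by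
    intro k s
    have h := convex_support_ineq (hLconv (γ k s)) (hLdiff (γ k s)) (glim s) (g k s - glim s)
    rw [add_sub_cancel] at h
    rwa [real_inner_comm] at h
  have hle_int : ∀ k, (∫ s, L (γ k s) (glim s) ∂μ) + (∫ s, ⟪g k s - glim s, Ψ k s⟫ ∂μ) ≤
      ∫ s, L (γ k s) (g k s) ∂μ := by
    intro k
    rw [← integral_add (hI2 k) (hI3 k)]
    exact integral_mono ((hI2 k).add (hI3 k)) (hI1 k) (fun s => hkey k s)
  -- weak convergence in the measure formulation
  have hweakμ : ∀ (φ : ℝ → EuclideanSpace ℝ (Fin n)), MemLp φ 2 μ →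
      Tendsto (fun k => ∫ s, ⟪g k s, φ s⟫ ∂μ) atTop (nhds (∫ s, ⟪glim s, φ s⟫ ∂μ)) := by
    intro φ hφ
    have h := hweak φ hφ
    simpa only [hconvi ℝ] using h
  -- Banach–Steinhaus : uniform bound on the L² norms of g k
  set Glp : ℕ → Lp (EuclideanSpace ℝ (Fin n)) 2 μ := fun k => (hg2 k).toLp (g k) with hGlpdef
  set Glim : Lp (EuclideanSpace ℝ (Fin n)) 2 μ := hglim2.toLp glim with hGlimdef
  obtain ⟨C', hC'⟩ : ∃ C', ∀ k, ‖innerSL ℝ (Glp k)‖ ≤ C' := by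
    refine banach_steinhaus ?_
    intro Φ
    have h2 : ∀ k, (innerSL ℝ (Glp k)) Φ = ∫ s, ⟪g k s, Φ s⟫ ∂μ := by
      intro k
      rw [innerSL_apply_apply, L2.inner_def]
      refine integral_congr_ae ?_
      filter_upwards [(hg2 k).coeFn_toLp] with s h
      rw [h]
    have h1 : Tendsto (fun k => ‖(innerSL ℝ (Glp k)) Φ‖) atTop
        (nhds ‖∫ s, ⟪glim s, Φ s⟫ ∂μ‖) := by
      have := (hweakμ Φ (Lp.memLp Φ)).norm
      simpa only [← h2] using this
    obtain ⟨c, hc⟩ := h1.bddAbove_range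
    exact ⟨c, fun k => hc (Set.mem_range_self k)⟩
  have hGbd : ∀ k, ‖Glp k‖ ≤ C' := by
    intro k
    rw [← innerSL_apply_norm (𝕜 := ℝ) (Glp k)]
    exact hC' k
  -- L² convergence of the gradients Ψ k → ψ
  set Ψlp : ℕ → Lp (EuclideanSpace ℝ (Fin n)) 2 μ := fun k => (hΨ2 k).toLp (Ψ k) with hΨlpdef
  set ψlp : Lp (EuclideanSpace ℝ (Fin n)) 2 μ := hψ2.toLp ψ with hψlpdef
  have hψtend_ae : ∀ᵐ s ∂μ, Tendsto (fun k => Ψ k s) atTop (nhds (ψ s)) := by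
    filter_upwards [hmem_ae] with s hs
    exact gradient_tendsto hLcont hLconv hLdiff hDL
      (hunif.tendsto_at (Set.Ioc_subset_Icc_self hs)) (glim s)
  have hsqint : Tendsto (fun k => ∫ s, ‖Ψ k s - ψ s‖ ^ 2 ∂μ) atTop (nhds 0) := by
    have h2dom : MemLp (fun s => 2 * C * (‖glim s‖ + 1)) 2 μ :=
      (hglim2.norm.add (memLp_const 1)).const_mul (2 * C)
    have hbint : Integrable (fun s => (2 * C * (‖glim s‖ + 1)) ^ 2) μ := by
      have := integrable_mul_of_memℒp h2dom h2dom
      refine this.congr (Eventually.of_forall fun s => ?_)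
      ring
    have := tendsto_integral_filter_of_dominated_convergence
      (μ := μ) (F := fun k s => ‖Ψ k s - ψ s‖ ^ 2) (f := fun _ => (0:ℝ))
      (fun s => (2 * C * (‖glim s‖ + 1)) ^ 2)
      (Eventually.of_forall fun k => by
        have h := ((hΨ2 k).sub hψ2).1.norm
        exact (h.mul h).congr (Eventually.of_forall fun s => by simp [sq]))
      (Eventually.of_forall fun k => by
        refine Eventually.of_forall fun s => ?_
        have h1 : ‖Ψ k s - ψ s‖ ≤ 2 * C * (‖glim s‖ + 1) := by
          have h4 := norm_sub_le (Ψ k s) (ψ s)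
          have h2 := hgradbd (γ k s) (glim s)
          have h3 := hgradbd (γlim s) (glim s)
          simp only [hΨdef, hψdef] at *
          nlinarith
        have h0 : (0:ℝ) ≤ ‖Ψ k s - ψ s‖ := norm_nonneg _
        show ‖‖Ψ k s - ψ s‖ ^ 2‖ ≤ (2 * C * (‖glim s‖ + 1)) ^ 2
        rw [Real.norm_eq_abs, abs_of_nonneg (pow_nonneg h0 2)]
        exact pow_le_pow_left₀ h0 h1 2)
      hbint
      (by
        filter_upwards [hψtend_ae] with s hs
        have h2 : Tendsto (fun k => Ψ k s - ψ s) atTop (nhds 0) := by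
          simpa using hs.sub (tendsto_const_nhds (x := ψ s))
        have h3 := (h2.norm).pow 2
        simpa using h3)
    simpa using this
  have hnorm_eq : ∀ k, ‖Ψlp k - ψlp‖ = Real.sqrt (∫ s, ‖Ψ k s - ψ s‖ ^ 2 ∂μ) := by
    intro k
    rw [show (∫ s, ‖Ψ k s - ψ s‖ ^ 2 ∂μ) = ‖((hΨ2 k).sub hψ2).toLp (Ψ k - ψ)‖ ^ 2 from
      integral_norm_sq_eq_toLp _]
    rw [MemLp.toLp_sub, Real.sqrt_sq (norm_nonneg _)]
  have hψlptend : Tendsto (fun k => ‖Ψlp k - ψlp‖) atTop (nhds 0) := by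
    rw [funext hnorm_eq]
    have h := (Real.continuous_sqrt.tendsto 0).comp hsqint
    simpa [Function.comp_def] using h
  -- part 1 of the cross term tends to 0
  have hc1eq : ∀ k, ∫ s, ⟪g k s - glim s, Ψ k s - ψ s⟫ ∂μ = ⟪Glp k - Glim, Ψlp k - ψlp⟫ := by
    intro k
    rw [L2.inner_def]
    refine integral_congr_ae ?_
    filter_upwards [Lp.coeFn_sub (Glp k) Glim, Lp.coeFn_sub (Ψlp k) ψlp,
      (hg2 k).coeFn_toLp, hglim2.coeFn_toLp, (hΨ2 k).coeFn_toLp, hψ2.coeFn_toLp]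
      with s h1 h2 h3 h4 h5 h6
    rw [h1, h2, Pi.sub_apply, Pi.sub_apply, h3, h4, h5, h6]
  have hc1 : Tendsto (fun k => ∫ s, ⟪g k s - glim s, Ψ k s - ψ s⟫ ∂μ) atTop (nhds 0) := by
    rw [funext hc1eq]
    have hbound : ∀ k, ‖⟪Glp k - Glim, Ψlp k - ψlp⟫‖ ≤ (C' + ‖Glim‖) * ‖Ψlp k - ψlp‖ := by
      intro k
      calc ‖⟪Glp k - Glim, Ψlp k - ψlp⟫‖ ≤ ‖Glp k - Glim‖ * ‖Ψlp k - ψlp‖ :=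
            abs_real_inner_le_norm _ _
        _ ≤ (C' + ‖Glim‖) * ‖Ψlp k - ψlp‖ := by
            refine mul_le_mul_of_nonneg_right ?_ (norm_nonneg _)
            exact (norm_sub_le _ _).trans (add_le_add_left (hGbd k) _)
    refine squeeze_zero_norm hbound ?_
    have := hψlptend.const_mul (C' + ‖Glim‖)
    simpa using this
  -- part 2 of the cross term tends to 0
  have hc2 : Tendsto (fun k => ∫ s, ⟪g k s - glim s, ψ s⟫ ∂μ) atTop (nhds 0) := by
    have heq : ∀ k, ∫ s, ⟪g k s - glim s, ψ s⟫ ∂μ =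
        (∫ s, ⟪g k s, ψ s⟫ ∂μ) - ∫ s, ⟪glim s, ψ s⟫ ∂μ := by
      intro k
      rw [← integral_sub (integrable_inner_of_memℒp (hg2 k) hψ2)
        (integrable_inner_of_memℒp hglim2 hψ2)]
      refine integral_congr_ae (Eventually.of_forall fun s => ?_)
      simp [inner_sub_left]
    rw [funext heq]
    have := (hweakμ ψ hψ2).sub_const (∫ s, ⟪glim s, ψ s⟫ ∂μ)
    simpa using this
  -- the full cross term tends to 0
  have hcross : Tendsto (fun k => ∫ s, ⟪g k s - glim s, Ψ k s⟫ ∂μ) atTop (nhds 0) := by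
    have hsplit : ∀ k, ∫ s, ⟪g k s - glim s, Ψ k s⟫ ∂μ =
        (∫ s, ⟪g k s - glim s, Ψ k s - ψ s⟫ ∂μ) + ∫ s, ⟪g k s - glim s, ψ s⟫ ∂μ := by
      intro k
      rw [← integral_add (hI3' k) (hI3'' k)]
      refine integral_congr_ae (Eventually.of_forall fun s => ?_)
      simp only
      rw [← inner_add_right, sub_add_cancel]
    rw [funext hsplit]
    simpa using hc1.add hc2
  -- convergence of ∫ L(γ k, glim) by dominated convergence
  have hb : Tendsto (fun k => ∫ s, L (γ k s) (glim s) ∂μ) atTop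
      (nhds (∫ s, L (γlim s) (glim s) ∂μ)) := by
    have hev : ∀ᶠ k in atTop, ∀ t ∈ Set.Icc (-1:ℝ) 0, dist (γlim t) (γ k t) < 1 :=
      Metric.tendstoUniformlyOn_iff.mp hunif 1 one_pos
    refine tendsto_integral_filter_of_dominated_convergence
      (fun s => B + C * (‖glim s‖ + 1) * ‖glim s‖)
      (Eventually.of_forall fun k => hLcont.comp_aestronglyMeasurable
        ((hγmeas k).prodMk hglim2.1))
      ?_ ?_ ?_
    · filter_upwards [hev] with k hk
      filter_upwards [hmem_ae] with s hs
      have hsI : s ∈ Set.Icc (-1:ℝ) 0 := Set.Ioc_subset_Icc_self hs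
      have hbd : ‖γ k s‖ ≤ M + 1 := by
        have h1 := hk s hsI
        have h2 := hM s hsI
        have := norm_sub_norm_le (γ k s) (γlim s)
        rw [dist_eq_norm] at h1
        have : ‖γ k s‖ - ‖γlim s‖ ≤ ‖γlim s - γ k s‖ := by
          rw [norm_sub_rev]
          exact (abs_le.mp (abs_norm_sub_norm_le (γ k s) (γlim s))).2
        linarith
      exact hLle (M+1) B _ _ hbd hB
    · refine (integrable_const B).add ?_
      exact integrable_mul_of_memℒp ((hglim2.norm.add (memLp_const 1)).const_mul C) hglim2.norm
    · filter_upwards [hmem_ae] with s hs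
      have hγt : Tendsto (fun k => γ k s) atTop (nhds (γlim s)) :=
        hunif.tendsto_at (Set.Ioc_subset_Icc_self hs)
      exact (hLcont.tendsto _).comp (hγt.prodMk_nhds tendsto_const_nhds)
  -- combine: the lower bounds converge to the target integral
  have ha : Tendsto (fun k => (∫ s, L (γ k s) (glim s) ∂μ) +
      (∫ s, ⟪g k s - glim s, Ψ k s⟫ ∂μ)) atTop (nhds (∫ s, L (γlim s) (glim s) ∂μ)) := by
    have := hb.add hcross
    simpa using this
  -- eventual upper bound for coboundedness
  set onelp : Lp ℝ 2 μ := (memLp_const (p := 2) (μ := μ) (1:ℝ)).toLp (fun _ => (1:ℝ))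
    with honelp
  have hup : ∀ᶠ k in atTop, (∫ s, L (γ k s) (g k s) ∂μ) ≤
      B * (μ Set.univ).toReal + C * (C' + ‖onelp‖) ^ 2 := by
    have hev : ∀ᶠ k in atTop, ∀ t ∈ Set.Icc (-1:ℝ) 0, dist (γlim t) (γ k t) < 1 :=
      Metric.tendstoUniformlyOn_iff.mp hunif 1 one_pos
    filter_upwards [hev] with k hk
    set wk : ℝ → ℝ := fun s => ‖g k s‖ + 1 with hwkdef
    have hwk2 : MemLp wk 2 μ := (hg2 k).norm.add (memLp_const 1)
    have hwkint : Integrable (fun s => wk s ^ 2) μ := by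
      have := integrable_mul_of_memℒp hwk2 hwk2
      refine this.congr (Eventually.of_forall fun s => ?_)
      ring
    have hstep1 : (∫ s, L (γ k s) (g k s) ∂μ) ≤ ∫ s, (B + C * wk s ^ 2) ∂μ := by
      refine integral_mono_ae (hI1 k) ((integrable_const B).add (hwkint.const_mul C)) ?_
      filter_upwards [hmem_ae] with s hs
      have hsI : s ∈ Set.Icc (-1:ℝ) 0 := Set.Ioc_subset_Icc_self hs
      have hbd : ‖γ k s‖ ≤ M + 1 := by
        have h1 := hk s hsI
        have h2 := hM s hsI
        rw [dist_eq_norm] at h1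
        have : ‖γ k s‖ - ‖γlim s‖ ≤ ‖γlim s - γ k s‖ := by
          rw [norm_sub_rev]
          exact (abs_le.mp (abs_norm_sub_norm_le (γ k s) (γlim s))).2
        linarith
      have h := hLle (M+1) B (γ k s) (g k s) hbd hB
      have h4 : C * (‖g k s‖ + 1) * ‖g k s‖ ≤ C * wk s ^ 2 := by
        have h5 : (0:ℝ) ≤ ‖g k s‖ := norm_nonneg _
        simp only [hwkdef]
        nlinarith
      have h5 : L (γ k s) (g k s) ≤ B + C * (‖g k s‖ + 1) * ‖g k s‖ :=
        (le_abs_self _).trans (by rw [← Real.norm_eq_abs]; exact h)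
      linarith
    have hstep2 : ∫ s, (B + C * wk s ^ 2) ∂μ =
        B * (μ Set.univ).toReal + C * ∫ s, wk s ^ 2 ∂μ := by
      rw [integral_add (integrable_const B) (hwkint.const_mul C), integral_const,
        integral_const_mul]
      simp [smul_eq_mul, mul_comm, measureReal_def]
    have he : ∫ s, wk s ^ 2 ∂μ = ‖hwk2.toLp wk‖ ^ 2 := by
      rw [← integral_norm_sq_eq_toLp hwk2]
      refine integral_congr_ae (Eventually.of_forall fun s => ?_)
      simp [Real.norm_eq_abs, sq_abs]
    have hn : ‖hwk2.toLp wk‖ ≤ C' + ‖onelp‖ := by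
      have heq2 : hwk2.toLp wk = ((hg2 k).norm).toLp (fun s => ‖g k s‖) + onelp :=
        MemLp.toLp_add _ _
      rw [heq2]
      refine (norm_add_le _ _).trans (add_le_add_left ?_ _)
      have h6 : ‖((hg2 k).norm).toLp (fun s => ‖g k s‖)‖ = ‖Glp k‖ := by
        rw [Lp.norm_toLp, Lp.norm_toLp, eLpNorm_norm]
      rw [h6]
      exact hGbd k
    have hstep3 : ∫ s, wk s ^ 2 ∂μ ≤ (C' + ‖onelp‖) ^ 2 := by
      rw [he]
      exact pow_le_pow_left₀ (norm_nonneg _) hn 2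
    calc ∫ s, L (γ k s) (g k s) ∂μ ≤ ∫ s, (B + C * wk s ^ 2) ∂μ := hstep1
      _ = B * (μ Set.univ).toReal + C * ∫ s, wk s ^ 2 ∂μ := hstep2
      _ ≤ B * (μ Set.univ).toReal + C * (C' + ‖onelp‖) ^ 2 := by
          have := mul_le_mul_of_nonneg_left hstep3 hC
          linarith
  have hfin := liminf_le_liminf (Eventually.of_forall hle_int) ha.isBoundedUnder_ge
    (isCoboundedUnder_ge_of_eventually_le atTop hup)
  rwa [ha.liminf_eq] at hfin
end

section
/- Let v : ℝⁿ → ℝ be Lipschitz and ρ_k a standard mollifier sequence. Then for every x, D(ρ_k ∗ v)(x) belongs to the closed convex hull of { Dv(y) : y ∈ B(x, 1/k), v differentiable at y }. -/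
open MeasureTheory

lemma aux_fderiv {n : ℕ} {K : NNReal} {v : EuclideanSpace ℝ (Fin n) → ℝ} (hv : LipschitzWith K v)
    {ρk : EuclideanSpace ℝ (Fin n) → ℝ} (hc : Continuous ρk) (hcs : HasCompactSupport ρk)
    (x u : EuclideanSpace ℝ (Fin n)) {F' : EuclideanSpace ℝ (Fin n) →L[ℝ] ℝ}
    (hfd : HasFDerivAt (fun z => ∫ y, ρk (z - y) * v y) F' x) :
    F' u = ∫ y, ρk (x - y) * (fderiv ℝ v y) u := by
  -- compact support of shifted kernel
  have hcs' : HasCompactSupport (fun y : EuclideanSpace ℝ (Fin n) => ρk (x - y)) := by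
    simpa [Function.comp_def] using hcs.comp_homeomorph (Homeomorph.subLeft x)
  have hc' : Continuous fun y : EuclideanSpace ℝ (Fin n) => ρk (x - y) := by fun_prop
  -- integrability of the products
  have hint : ∀ t : ℝ, Integrable (fun y : EuclideanSpace ℝ (Fin n) => ρk (x - y) * v (y + t • u)) := by
    intro t
    apply Continuous.integrable_of_hasCompactSupport
    · exact hc'.mul (hv.continuous.comp (by fun_prop))
    · exact hcs'.mul_right
  have hint0 : Integrable (fun y : EuclideanSpace ℝ (Fin n) => ρk (x - y) * v y) := by
    simpa using hint 0
  -- slope identity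
  have hq : ∀ t : ℝ, t ≠ 0 →
      t⁻¹ • ((∫ y, ρk (x + t • u - y) * v y) - ∫ y, ρk (x - y) * v y)
        = ∫ y, ρk (x - y) * (t⁻¹ * (v (y + t • u) - v y)) := by
    intro t ht
    have step1 : (∫ y, ρk (x + t • u - y) * v y) = ∫ y, ρk (x - y) * v (y + t • u) := by
      have h2 := integral_add_right_eq_self (μ := volume)
        (fun y : EuclideanSpace ℝ (Fin n) => ρk (x + t • u - y) * v y) (t • u)
      rw [← h2]
      congr 1
      funext y
      congr 2
      abel
    rw [step1, ← integral_sub (hint t) hint0, ← integral_smul]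
    congr 1
    funext y
    simp only [smul_eq_mul]
    ring
  -- the sequence of shrinking step sizes
  set ts : ℕ → ℝ := fun j => (1 : ℝ) / (j + 1) with hts
  have hts_ne : ∀ j, ts j ≠ 0 := fun j => by positivity
  have hts_to : Filter.Tendsto ts Filter.atTop (nhdsWithin 0 {(0:ℝ)}ᶜ) := by
    apply Filter.Tendsto.mono_left ?_ le_rfl
    refine tendsto_nhdsWithin_of_tendsto_nhds_of_eventually_within _
      tendsto_one_div_add_atTop_nhds_zero_nat ?_
    exact Filter.Eventually.of_forall fun j => hts_ne j
  -- difference quotient of the mollified function tends to F' u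
  have hline : HasDerivAt (fun s : ℝ => x + s • u) u 0 := by
    simpa using ((hasDerivAt_id (0:ℝ)).smul_const u).const_add x
  have hfd0 : HasFDerivAt (fun z => ∫ y, ρk (z - y) * v y) F' (x + (0:ℝ) • u) := by
    simpa using hfd
  have hd2 : HasDerivAt (fun s : ℝ => ∫ y, ρk (x + s • u - y) * v y) (F' u) 0 := by
    simpa [Function.comp_def] using hfd0.comp_hasDerivAt 0 hline
  have hslope : Filter.Tendsto
      (fun j => (ts j)⁻¹ • ((∫ y, ρk (x + ts j • u - y) * v y) - ∫ y, ρk (x - y) * v y))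
      Filter.atTop (nhds (F' u)) := by
    have h := hd2.tendsto_slope_zero
    have h2 := h.comp hts_to
    simpa [Function.comp_def] using h2
  -- rewrite by hq
  have hslope2 : Filter.Tendsto
      (fun j => ∫ y, ρk (x - y) * ((ts j)⁻¹ * (v (y + ts j • u) - v y)))
      Filter.atTop (nhds (F' u)) := by
    refine hslope.congr fun j => ?_
    exact hq (ts j) (hts_ne j)
  -- DCT
  have hbound_int : Integrable (fun y : EuclideanSpace ℝ (Fin n) => ‖ρk (x - y)‖ * ((K : ℝ) * ‖u‖)) := by
    exact ((hc'.integrable_of_hasCompactSupport hcs').norm.mul_const _)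
  have hDCT : Filter.Tendsto
      (fun j => ∫ y, ρk (x - y) * ((ts j)⁻¹ * (v (y + ts j • u) - v y)))
      Filter.atTop (nhds (∫ y, ρk (x - y) * (fderiv ℝ v y) u)) := by
    apply tendsto_integral_of_dominated_convergence
      (fun y => ‖ρk (x - y)‖ * ((K : ℝ) * ‖u‖))
    · intro j
      exact (hc'.mul (continuous_const.mul
        ((hv.continuous.comp (by fun_prop)).sub hv.continuous))).aestronglyMeasurable
    · exact hbound_int
    · intro j
      refine Filter.Eventually.of_forall fun y => ?_
      have h1 : |v (y + ts j • u) - v y| ≤ (K : ℝ) * (|ts j| * ‖u‖) := by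
        have := hv.dist_le_mul (y + ts j • u) y
        simpa [Real.dist_eq, dist_eq_norm, add_sub_cancel_left, norm_smul] using this
      have h2 : |(ts j)⁻¹ * (v (y + ts j • u) - v y)| ≤ (K : ℝ) * ‖u‖ := by
        rw [abs_mul]
        calc |(ts j)⁻¹| * |v (y + ts j • u) - v y|
            ≤ |(ts j)⁻¹| * ((K : ℝ) * (|ts j| * ‖u‖)) := by
              exact mul_le_mul_of_nonneg_left h1 (abs_nonneg _)
          _ = (K : ℝ) * ‖u‖ := by
              rw [abs_inv]
              have : |ts j| ≠ 0 := abs_ne_zero.mpr (hts_ne j)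
              field_simp
      calc ‖ρk (x - y) * ((ts j)⁻¹ * (v (y + ts j • u) - v y))‖
          = ‖ρk (x - y)‖ * |(ts j)⁻¹ * (v (y + ts j • u) - v y)| := by
            rw [norm_mul]; rfl
        _ ≤ ‖ρk (x - y)‖ * ((K : ℝ) * ‖u‖) :=
            mul_le_mul_of_nonneg_left h2 (norm_nonneg _)
    · filter_upwards [hv.ae_differentiableAt (μ := volume)] with y hy
      have hgl : HasDerivAt (fun s : ℝ => v (y + s • u)) ((fderiv ℝ v y) u) 0 := by
        have hline' : HasDerivAt (fun s : ℝ => y + s • u) u 0 := by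
          simpa using ((hasDerivAt_id (0:ℝ)).smul_const u).const_add y
        have hy' : HasFDerivAt v (fderiv ℝ v y) (y + (0:ℝ) • u) := by
          simpa using hy.hasFDerivAt
        simpa [Function.comp_def] using hy'.comp_hasDerivAt 0 hline'
      have h3 := (hgl.tendsto_slope_zero).comp hts_to
      have h4 : Filter.Tendsto (fun j => (ts j)⁻¹ * (v (y + ts j • u) - v y))
          Filter.atTop (nhds ((fderiv ℝ v y) u)) := by
        simpa [Function.comp_def] using h3
      exact (h4.const_mul (ρk (x - y)))
  exact tendsto_nhds_unique hslope2 hDCT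

theorem stmt_11 (n : ℕ) (K : NNReal)
    (v : EuclideanSpace ℝ (Fin n) → ℝ) (hv : LipschitzWith K v)
    (ρ : EuclideanSpace ℝ (Fin n) → ℝ) (hρsm : ContDiff ℝ (⊤ : ℕ∞) ρ)
    (hρpos : ∀ x, 0 ≤ ρ x) (hρsupp : Function.support ρ ⊆ Metric.ball 0 1)
    (hρint : (∫ x, ρ x) = 1)
    (k : ℕ) (hk : 1 ≤ k) :
    ∀ x : EuclideanSpace ℝ (Fin n),
      gradient (fun z => ∫ y, ((k : ℝ) ^ n * ρ ((k : ℝ) • (z - y))) * v y) x ∈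
        closure (convexHull ℝ
          {g : EuclideanSpace ℝ (Fin n) | ∃ y,
            y ∈ Metric.ball x (1 / (k : ℝ)) ∧ DifferentiableAt ℝ v y ∧
              g = gradient v y}) := by
  intro x
  have hkpos : (0:ℝ) < (k:ℝ) := by exact_mod_cast hk
  set ρk : EuclideanSpace ℝ (Fin n) → ℝ := fun z => (k : ℝ) ^ n * ρ ((k : ℝ) • z) with hρkdef
  have hρk_smooth : ContDiff ℝ (⊤ : ℕ∞) ρk :=
    contDiff_const.mul (hρsm.comp (contDiff_id.const_smul ((k:ℝ))))
  have hρk_cont : Continuous ρk := hρk_smooth.continuous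
  have hρk_nonneg : ∀ z, 0 ≤ ρk z := fun z =>
    mul_nonneg (by positivity) (hρpos _)
  have hρk_supp : Function.support ρk ⊆ Metric.ball 0 (1 / (k:ℝ)) := by
    intro z hz
    have h1 : ρ ((k:ℝ) • z) ≠ 0 := by
      intro h0
      apply hz
      simp [hρkdef, h0]
    have h2 : (k:ℝ) • z ∈ Metric.ball (0 : EuclideanSpace ℝ (Fin n)) 1 := hρsupp h1
    rw [mem_ball_zero_iff] at h2 ⊢
    rw [norm_smul, Real.norm_eq_abs, abs_of_pos hkpos] at h2
    rw [lt_div_iff₀ hkpos, mul_comm]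
    simpa using h2
  have hρk_cs : HasCompactSupport ρk := by
    apply HasCompactSupport.intro (isCompact_closedBall (0 : EuclideanSpace ℝ (Fin n)) (1/(k:ℝ)))
    intro z hz
    by_contra h0
    exact hz (Metric.ball_subset_closedBall (hρk_supp h0))
  have hρk_int : (∫ z, ρk z) = 1 := by
    have hvol := Measure.integral_comp_smul (volume : Measure (EuclideanSpace ℝ (Fin n))) ρ (k:ℝ)
    rw [finrank_euclideanSpace_fin] at hvol
    rw [hρkdef]
    simp only []
    rw [integral_const_mul, hvol, hρint, smul_eq_mul, mul_one,
      abs_of_pos (by positivity : (0:ℝ) < ((k:ℝ)^n)⁻¹)]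
    field_simp
  -- the mollified function and its derivative
  have hloc : LocallyIntegrable v volume := hv.continuous.locallyIntegrable
  have feq : (fun z => ∫ y, ρk (z - y) * v y)
      = convolution ρk v (ContinuousLinearMap.mul ℝ ℝ) volume := by
    funext z
    rw [convolution]
    have h := integral_sub_left_eq_self (fun t => ρk t * v (z - t)) volume z
    simp only [sub_sub_cancel] at h
    simpa using h
  have hfd : HasFDerivAt (fun z => ∫ y, ρk (z - y) * v y)
      (convolution (fderiv ℝ ρk) v
        (ContinuousLinearMap.precompL (EuclideanSpace ℝ (Fin n)) (ContinuousLinearMap.mul ℝ ℝ))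
        volume x) x := by
    rw [feq]
    exact hρk_cs.hasFDerivAt_convolution_left _ (hρk_smooth.of_le (by simp)) hloc x
  have key : ∀ u, (fderiv ℝ (fun z => ∫ y, ρk (z - y) * v y) x) u
      = ∫ y, ρk (x - y) * (fderiv ℝ v y) u := by
    intro u
    rw [hfd.fderiv]
    exact aux_fderiv hv hρk_cont hρk_cs x u hfd
  -- kernel integrability and normalization
  have hcs' : HasCompactSupport (fun y : EuclideanSpace ℝ (Fin n) => ρk (x - y)) := by
    simpa [Function.comp_def] using hρk_cs.comp_homeomorph (Homeomorph.subLeft x)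
  have hc' : Continuous fun y : EuclideanSpace ℝ (Fin n) => ρk (x - y) := by fun_prop
  have hker_int : Integrable (fun y : EuclideanSpace ℝ (Fin n) => ρk (x - y)) :=
    hc'.integrable_of_hasCompactSupport hcs'
  have hone : (∫ y, ρk (x - y)) = 1 := by
    rw [integral_sub_left_eq_self ρk volume x]
    exact hρk_int
  -- conclude by separation
  by_contra hmem
  obtain ⟨φ, u₀, hlt, hgt⟩ := _root_.geometric_hahn_banach_closed_point
    ((convex_convexHull ℝ _).closure) isClosed_closure hmem
  set w := (InnerProductSpace.toDual ℝ (EuclideanSpace ℝ (Fin n))).symm φ with hw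
  have hφ : ∀ z, φ z = (inner ℝ w z : ℝ) := fun z =>
    (InnerProductSpace.toDual_symm_apply).symm
  -- value of φ at gradient of mollified function
  have hφgrad : φ (gradient (fun z => ∫ y, ρk (z - y) * v y) x)
      = ∫ y, ρk (x - y) * (fderiv ℝ v y) w := by
    rw [hφ, real_inner_comm]
    rw [show gradient (fun z => ∫ y, ρk (z - y) * v y) x
        = (InnerProductSpace.toDual ℝ (EuclideanSpace ℝ (Fin n))).symm
            (fderiv ℝ (fun z => ∫ y, ρk (z - y) * v y) x) from rfl]
    rw [InnerProductSpace.toDual_symm_apply]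
    exact key w
  -- integrand comparison
  have hae : ∀ᵐ y : EuclideanSpace ℝ (Fin n) ∂volume,
      ρk (x - y) * (fderiv ℝ v y) w ≤ ρk (x - y) * u₀ := by
    filter_upwards [hv.ae_differentiableAt (μ := volume)] with y hy
    rcases eq_or_lt_of_le (hρk_nonneg (x - y)) with h0 | hpos
    · rw [← h0]; simp
    · have hyb : y ∈ Metric.ball x (1 / (k:ℝ)) := by
        have hsup : x - y ∈ Function.support ρk := fun h => by rw [h] at hpos; exact lt_irrefl 0 hpos
        have := hρk_supp hsup
        rw [mem_ball_zero_iff] at this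
        rw [Metric.mem_ball, dist_eq_norm, ← norm_neg]
        simpa using this
    -- gradient v y belongs to the set
      have hmemS : gradient v y ∈ closure (convexHull ℝ
          {g : EuclideanSpace ℝ (Fin n) | ∃ y', y' ∈ Metric.ball x (1 / (k:ℝ)) ∧
            DifferentiableAt ℝ v y' ∧ g = gradient v y'}) :=
        subset_closure (subset_convexHull ℝ _ ⟨y, hyb, hy, rfl⟩)
      have hlt' := hlt _ hmemS
      have hval : φ (gradient v y) = (fderiv ℝ v y) w := by
        rw [hφ, real_inner_comm,
          show gradient v y = (InnerProductSpace.toDual ℝ (EuclideanSpace ℝ (Fin n))).symm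
            (fderiv ℝ v y) from rfl, InnerProductSpace.toDual_symm_apply]
      rw [hval] at hlt'
      exact mul_le_mul_of_nonneg_left hlt'.le (le_of_lt hpos)
  -- integrability of both sides
  have hbd : ∀ y, ‖(fderiv ℝ v y) w‖ ≤ (K:ℝ) * ‖w‖ := by
    intro y
    by_cases hy : DifferentiableAt ℝ v y
    · calc ‖(fderiv ℝ v y) w‖ ≤ ‖fderiv ℝ v y‖ * ‖w‖ := (fderiv ℝ v y).le_opNorm w
        _ ≤ (K:ℝ) * ‖w‖ := mul_le_mul_of_nonneg_right
            (norm_fderiv_le_of_lipschitz ℝ hv) (norm_nonneg w)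
    · rw [fderiv_zero_of_not_differentiableAt hy]
      simp [mul_nonneg (NNReal.coe_nonneg K) (norm_nonneg w)]
  have hInt1 : Integrable (fun y : EuclideanSpace ℝ (Fin n) => ρk (x - y) * (fderiv ℝ v y) w) := by
    apply Integrable.mono' (hker_int.norm.mul_const ((K:ℝ) * ‖w‖))
    · exact hc'.aestronglyMeasurable.mul
        ((measurable_fderiv_apply_const ℝ v w).aestronglyMeasurable)
    · refine Filter.Eventually.of_forall fun y => ?_
      rw [norm_mul]
      exact mul_le_mul_of_nonneg_left (hbd y) (norm_nonneg _)
  have hInt2 : Integrable (fun y : EuclideanSpace ℝ (Fin n) => ρk (x - y) * u₀) :=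
    hker_int.mul_const u₀
  have hle : (∫ y, ρk (x - y) * (fderiv ℝ v y) w) ≤ ∫ y, ρk (x - y) * u₀ :=
    integral_mono_ae hInt1 hInt2 hae
  have hru : (∫ y, ρk (x - y) * u₀) = u₀ := by
    rw [integral_mul_const, hone, one_mul]
  rw [hφgrad] at hgt
  rw [hru] at hle
  exact absurd (lt_of_lt_of_le hgt hle) (lt_irrefl u₀)
end

section
/- Let m ≥ 2 and let (c_{ij}) be an m×m real matrix with c_{ii} ≥ 0, c_{ij} ≤ 0 for i ≠ j, and all row sums and column sums zero, and assume (c_{ij}) is irreducible. Let φ₁,…,φ_m : (−∞,0] → ℝ solve −φ̇_k + Σ_j c_{kj} φ_j = 0 with φ_k(0) = δ_i^k for a fixed i. Then 0 ≤ φ_k(s) ≤ 1 for all k and s ≤ 0, Σ_k φ_k(s) = 1 for all s ≤ 0, and φ_k(s) → 1/m as s → −∞ for each k. -/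
open Filter Set

lemma mono_aux (F F' : ℝ → ℝ) (h : ∀ s ≤ (0:ℝ), HasDerivAt F (F' s) s)
    (h' : ∀ s < (0:ℝ), 0 ≤ F' s) : MonotoneOn F (Set.Iic 0) := by
  apply monotoneOn_of_deriv_nonneg (convex_Iic 0)
  · intro s hs
    exact ((h s hs).continuousAt).continuousWithinAt
  · intro s hs
    rw [interior_Iic] at hs
    exact ((h s hs.le).differentiableAt).differentiableWithinAt
  · intro s hs
    rw [interior_Iic] at hs
    rw [(h s hs.le).deriv]
    exact h' s hs

lemma hasDerivAt_negsq (x : ℝ) : HasDerivAt (fun y => (min y 0)^2) (2 * min x 0) x := by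
  rcases lt_trichotomy x 0 with hx | hx | hx
  · have : (fun y : ℝ => (min y 0)^2) =ᶠ[nhds x] fun y => y^2 := by
      filter_upwards [Iio_mem_nhds hx] with y hy
      rw [min_eq_left (le_of_lt hy)]
    rw [min_eq_left hx.le]
    have h2 := (hasDerivAt_pow 2 x).congr_of_eventuallyEq this
    simpa [mul_comm] using h2
  · subst hx
    rw [min_self, mul_zero]
    rw [hasDerivAt_iff_tendsto_slope]
    have hb : ∀ y : ℝ, y ≠ 0 → |slope (fun y : ℝ => (min y 0)^2) 0 y| ≤ |y| := by
      intro y hy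
      rw [slope_def_field]
      rcases le_or_gt y 0 with h | h
      · rw [min_eq_left h]
        simp only [min_self, ne_eq, OfNat.ofNat_ne_zero, not_false_eq_true, zero_pow, sub_zero]
        rw [div_eq_mul_inv, pow_two, mul_assoc, abs_mul]
        calc |y| * |y * y⁻¹| ≤ |y| * 1 := by
              apply mul_le_mul_of_nonneg_left _ (abs_nonneg _)
              rw [abs_mul, abs_inv]
              rcases eq_or_ne y 0 with rfl | h0
              · simp
              · rw [mul_inv_cancel₀ (abs_ne_zero.2 h0)]
          _ = |y| := mul_one _
      · rw [min_eq_right h.le]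
        simp
    have h0 : Tendsto (fun y : ℝ => |y|) (nhdsWithin 0 {(0:ℝ)}ᶜ) (nhds 0) := by
      have := (continuous_abs.tendsto (0:ℝ)).mono_left (nhdsWithin_le_nhds (s := {(0:ℝ)}ᶜ))
      simpa using this
    apply squeeze_zero_norm' _ h0
    filter_upwards [self_mem_nhdsWithin] with y hy
    simpa using hb y hy
  · have : (fun y : ℝ => (min y 0)^2) =ᶠ[nhds x] fun _ => (0:ℝ) := by
      filter_upwards [Ioi_mem_nhds hx] with y hy
      rw [min_eq_right (le_of_lt hy)]
      simp
    rw [min_eq_right hx.le, mul_zero]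
    exact (hasDerivAt_const x 0).congr_of_eventuallyEq this

lemma key_identity (m : ℕ) (c : Fin m → Fin m → ℝ) (hrow : ∀ i, (∑ j, c i j) = 0)
    (hcol : ∀ j, (∑ i, c i j) = 0) (x : Fin m → ℝ) :
    ∑ k, ∑ j, (-(c k j)) * (x k - x j)^2 = 2 * ∑ k, x k * ∑ j, c k j * x j := by
  have h1 : ∀ k : Fin m, ∑ j, c k j * x k ^ 2 = 0 := by
    intro k; rw [← Finset.sum_mul, hrow, zero_mul]
  have h3 : ∀ k : Fin m, ∑ j, c k j * (x k * x j) = x k * ∑ j, c k j * x j := by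
    intro k; rw [Finset.mul_sum]; exact Finset.sum_congr rfl fun j _ => by ring
  have inner : ∀ k : Fin m, ∑ j, (-(c k j)) * (x k - x j)^2
      = 2 * (x k * ∑ j, c k j * x j) - (0 + ∑ j, c k j * x j ^ 2) := by
    intro k
    rw [← h3 k, ← h1 k, ← Finset.sum_add_distrib, Finset.mul_sum, ← Finset.sum_sub_distrib]
    exact Finset.sum_congr rfl fun j _ => by ring
  have h2 : ∑ k : Fin m, ∑ j, c k j * x j ^ 2 = 0 := by
    rw [Finset.sum_comm]
    exact Finset.sum_eq_zero fun j _ => by rw [← Finset.sum_mul, hcol, zero_mul]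
  calc ∑ k, ∑ j, (-(c k j)) * (x k - x j)^2
      = ∑ k, (2 * (x k * ∑ j, c k j * x j) - (0 + ∑ j, c k j * x j ^ 2)) :=
        Finset.sum_congr rfl fun k _ => inner k
    _ = 2 * ∑ k, x k * ∑ j, c k j * x j := by
        rw [Finset.sum_sub_distrib, ← Finset.mul_sum]
        simp [Finset.sum_add_distrib, h2]

lemma gap_lemma (m : ℕ) (hm : 2 ≤ m) (c : Fin m → Fin m → ℝ)
    (hoff : ∀ i j, i ≠ j → c i j ≤ 0)
    (hirr : ∀ I : Finset (Fin m), I.Nonempty → I ≠ Finset.univ →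
      ∃ i ∈ I, ∃ j ∉ I, c i j ≠ 0) :
    ∃ lam > (0:ℝ), ∀ x : Fin m → ℝ, (∑ k, x k) = 0 →
      lam * ∑ k, (x k)^2 ≤ ∑ k, ∑ j, (-(c k j)) * (x k - x j)^2 := by
  set Q : (Fin m → ℝ) → ℝ := fun x => ∑ k, ∑ j, (-(c k j)) * (x k - x j)^2 with hQdef
  have hterm : ∀ (x : Fin m → ℝ) (k j : Fin m), 0 ≤ (-(c k j)) * (x k - x j)^2 := by
    intro x k j
    rcases eq_or_ne k j with rfl | h
    · simp
    · exact mul_nonneg (neg_nonneg.2 (hoff k j h)) (sq_nonneg _)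
  have hQ0 : ∀ x, 0 ≤ Q x :=
    fun x => Finset.sum_nonneg fun k _ => Finset.sum_nonneg fun j _ => hterm x k j
  have hQcont : Continuous Q := by
    apply continuous_finset_sum _ fun k _ => ?_
    apply continuous_finset_sum _ fun j _ => ?_
    exact (continuous_const.mul (((continuous_apply k).sub (continuous_apply j)).pow 2))
  set K : Set (Fin m → ℝ) := {x | (∑ k, x k) = 0 ∧ (∑ k, (x k)^2) = 1} with hKdef
  have hKclosed : IsClosed K := by
    have c1 : Continuous fun x : Fin m → ℝ => ∑ k, x k :=
      continuous_finset_sum _ fun k _ => continuous_apply k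
    have c2 : Continuous fun x : Fin m → ℝ => ∑ k, (x k)^2 :=
      continuous_finset_sum _ fun k _ => (continuous_apply k).pow 2
    exact (isClosed_singleton.preimage c1).inter (isClosed_singleton.preimage c2)
  have hKcompact : IsCompact K := by
    apply Metric.isCompact_of_isClosed_isBounded hKclosed
    rw [Metric.isBounded_iff_subset_closedBall 0]
    refine ⟨1, fun x hx => ?_⟩
    rw [Metric.mem_closedBall, dist_zero_right]
    rw [pi_norm_le_iff_of_nonneg zero_le_one]
    intro k
    rw [Real.norm_eq_abs, ← sq_le_one_iff_abs_le_one]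
    calc (x k)^2 ≤ ∑ j, (x j)^2 :=
          Finset.single_le_sum (fun j _ => sq_nonneg (x j)) (Finset.mem_univ k)
      _ = 1 := hx.2
  have hab : (⟨0, by omega⟩ : Fin m) ≠ ⟨1, by omega⟩ := by
    intro h; exact absurd (congrArg Fin.val h) (by simp)
  have hKne : K.Nonempty := by
    set a : Fin m := ⟨0, by omega⟩
    set b : Fin m := ⟨1, by omega⟩
    refine ⟨fun k => (Real.sqrt 2)⁻¹ * ((Pi.single a 1 : Fin m → ℝ) k - (Pi.single b 1 : Fin m → ℝ) k), ?_, ?_⟩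
    · rw [← Finset.mul_sum, Finset.sum_sub_distrib, Finset.sum_pi_single', Finset.sum_pi_single']
      simp
    · have hd2 : ∀ k : Fin m, ((Pi.single a 1 : Fin m → ℝ) k - (Pi.single b 1 : Fin m → ℝ) k)^2
          = (Pi.single a 1 : Fin m → ℝ) k + (Pi.single b 1 : Fin m → ℝ) k := by
        intro k
        simp only [Pi.single_apply]
        split_ifs with h1 h2
        · exact absurd (h1 ▸ h2 ▸ rfl : a = b) hab
        · norm_num
        · norm_num
        · norm_num
      have : ∀ k : Fin m, ((Real.sqrt 2)⁻¹ * ((Pi.single a 1 : Fin m → ℝ) k - (Pi.single b 1 : Fin m → ℝ) k))^2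
          = 2⁻¹ * ((Pi.single a 1 : Fin m → ℝ) k + (Pi.single b 1 : Fin m → ℝ) k) := by
        intro k
        rw [mul_pow, ← hd2 k, ← Real.sqrt_inv, Real.sq_sqrt (by norm_num)]
      rw [Finset.sum_congr rfl fun k _ => this k, ← Finset.mul_sum, Finset.sum_add_distrib,
        Finset.sum_pi_single', Finset.sum_pi_single']
      simp
      norm_num
  obtain ⟨x₀, hx₀K, hmin⟩ := hKcompact.exists_isMinOn hKne hQcont.continuousOn
  have hlampos : 0 < Q x₀ := by
    rcases (hQ0 x₀).lt_or_eq with h | h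
    · exact h
    · exfalso
      have hzero : ∀ k j : Fin m, c k j ≠ 0 → x₀ k = x₀ j := by
        intro k j hc
        have hsum0 : ∑ k, ∑ j, (-(c k j)) * (x₀ k - x₀ j)^2 = 0 := h.symm
        have h1 := (Finset.sum_eq_zero_iff_of_nonneg
          (fun k _ => Finset.sum_nonneg fun j _ => hterm x₀ k j)).1 hsum0 k (Finset.mem_univ k)
        have h2 := (Finset.sum_eq_zero_iff_of_nonneg
          (fun j _ => hterm x₀ k j)).1 h1 j (Finset.mem_univ j)
        rcases mul_eq_zero.1 h2 with h3 | h3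
        · exact absurd (neg_eq_zero.1 h3) hc
        · exact sub_eq_zero.1 ((pow_eq_zero_iff (two_ne_zero)).1 h3)
      set k₀ : Fin m := ⟨0, by omega⟩
      set I : Finset (Fin m) := Finset.univ.filter (fun k => x₀ k = x₀ k₀) with hIdef
      have hIuniv : I = Finset.univ := by
        by_contra hne
        obtain ⟨p, hpI, q, hqI, hc⟩ := hirr I ⟨k₀, by simp [hIdef]⟩ hne
        have hp : x₀ p = x₀ k₀ := (Finset.mem_filter.1 hpI).2
        have hq : x₀ q ≠ x₀ k₀ := fun hq => hqI (Finset.mem_filter.2 ⟨Finset.mem_univ q, hq⟩)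
        exact hq ((hzero p q hc).symm.trans hp)
      have hconst : ∀ k, x₀ k = x₀ k₀ := by
        intro k
        have : k ∈ I := hIuniv ▸ Finset.mem_univ k
        exact (Finset.mem_filter.1 this).2
      have hsum : ∑ k : Fin m, x₀ k = m * x₀ k₀ := by
        rw [Finset.sum_congr rfl fun k _ => hconst k]
        simp [Finset.sum_const, Finset.card_univ]
      have hx00 : x₀ k₀ = 0 := by
        have := hx₀K.1
        rw [hsum] at this
        have hm0 : (m:ℝ) ≠ 0 := by positivity
        have := mul_eq_zero.1 this
        rcases this with h | h
        · exact absurd h hm0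
        · exact h
      have : ∑ k, (x₀ k)^2 = 0 := by
        apply Finset.sum_eq_zero
        intro k _
        rw [hconst k, hx00]; ring
      rw [hx₀K.2] at this
      norm_num at this
  refine ⟨Q x₀, hlampos, fun x hx => ?_⟩
  rcases eq_or_lt_of_le (Finset.sum_nonneg fun k (_ : k ∈ Finset.univ) => sq_nonneg (x k))
      with h0 | h0
  · rw [← h0, mul_zero]; exact hQ0 x
  · set r : ℝ := Real.sqrt (∑ k, (x k)^2) with hrdef
    have hr0 : 0 < r := Real.sqrt_pos.2 h0
    have hr2 : r^2 = ∑ k, (x k)^2 := Real.sq_sqrt h0.le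
    set y : Fin m → ℝ := fun k => r⁻¹ * x k with hydef
    have hyK : y ∈ K := by
      constructor
      · show (∑ k, y k) = 0
        simp only [hydef]
        rw [← Finset.mul_sum, hx, mul_zero]
      · show (∑ k, (y k)^2) = 1
        have : ∀ k, (y k)^2 = r⁻¹^2 * (x k)^2 := fun k => by rw [hydef]; ring
        rw [Finset.sum_congr rfl fun k _ => this k, ← Finset.mul_sum, ← hr2]
        field_simp
    have hQy : Q y = r⁻¹^2 * Q x := by
      simp only [hQdef, hydef]
      rw [Finset.mul_sum]
      apply Finset.sum_congr rfl
      intro k _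
      rw [Finset.mul_sum]
      apply Finset.sum_congr rfl
      intro j _
      ring
    have hlam : Q x₀ ≤ r⁻¹^2 * Q x := hQy ▸ hmin hyK
    calc Q x₀ * ∑ k, (x k)^2 = Q x₀ * r^2 := by rw [hr2]
      _ ≤ (r⁻¹^2 * Q x) * r^2 := by
          apply mul_le_mul_of_nonneg_right hlam (sq_nonneg r)
      _ = Q x := by field_simp

theorem stmt_14 (m : ℕ) (hm : 2 ≤ m) (c : Fin m → Fin m → ℝ)
    (hdiag : ∀ i, 0 ≤ c i i) (hoff : ∀ i j, i ≠ j → c i j ≤ 0)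
    (hrow : ∀ i, (∑ j, c i j) = 0) (hcol : ∀ j, (∑ i, c i j) = 0)
    (hirr : ∀ I : Finset (Fin m), I.Nonempty → I ≠ Finset.univ →
      ∃ i ∈ I, ∃ j ∉ I, c i j ≠ 0)
    (i : Fin m) (φ : Fin m → ℝ → ℝ)
    (hode : ∀ k, ∀ s ≤ (0 : ℝ), HasDerivAt (φ k) (∑ j, c k j * φ j s) s)
    (hinit : ∀ k, φ k 0 = if k = i then 1 else 0) :
    (∀ k, ∀ s ≤ (0 : ℝ), 0 ≤ φ k s ∧ φ k s ≤ 1) ∧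
      (∀ s ≤ (0 : ℝ), (∑ k, φ k s) = 1) ∧
      ∀ k, Tendsto (φ k) atBot (nhds (1 / (m : ℝ))) := by
  have hm0 : (m:ℝ) ≠ 0 := by positivity
  -- Part A : sum is constant equal to 1
  have hS : ∀ s ≤ (0:ℝ), HasDerivAt (fun s => ∑ k, φ k s) 0 s := by
    intro s hs
    have h := HasDerivAt.fun_sum (fun k (_ : k ∈ Finset.univ) => hode k s hs)
    have hz : (∑ k : Fin m, ∑ j, c k j * φ j s) = 0 := by
      rw [Finset.sum_comm]
      exact Finset.sum_eq_zero fun j _ => by rw [← Finset.sum_mul, hcol, zero_mul]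
    exact hz ▸ h
  have hS0 : (∑ k, φ k 0) = 1 := by
    simp only [hinit]
    simp
  have hsum : ∀ s ≤ (0:ℝ), (∑ k, φ k s) = 1 := by
    intro s hs
    have m1 := mono_aux (fun s => ∑ k, φ k s) (fun _ => 0) hS (fun _ _ => le_refl 0)
    have m2 := mono_aux (fun s => -(∑ k, φ k s)) (fun _ => 0)
      (fun s hs => by simpa using (hS s hs).fun_neg) (fun _ _ => le_refl 0)
    have h1 : (∑ k, φ k s) ≤ ∑ k, φ k 0 := m1 (mem_Iic.2 hs) (mem_Iic.2 le_rfl) hs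
    have h2 : -(∑ k, φ k s) ≤ -(∑ k, φ k 0) :=
      m2 (mem_Iic.2 hs) (mem_Iic.2 le_rfl) hs
    rw [hS0] at h1 h2
    linarith
  -- Part B : nonnegativity
  set K0 : ℝ := ∑ k : Fin m, ∑ j, |c k j| with hK0def
  have hK0 : 0 ≤ K0 :=
    Finset.sum_nonneg fun k _ => Finset.sum_nonneg fun j _ => abs_nonneg _
  set P : ℝ → ℝ := fun s => ∑ k, (min (φ k s) 0)^2 with hPdef
  have hP0 : ∀ s, 0 ≤ P s := fun s => Finset.sum_nonneg fun k _ => sq_nonneg _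
  have hPd : ∀ s ≤ (0:ℝ), HasDerivAt P
      (∑ k, 2 * min (φ k s) 0 * (∑ j, c k j * φ j s)) s := by
    intro s hs
    exact HasDerivAt.fun_sum fun k _ => (hasDerivAt_negsq (φ k s)).comp s (hode k s hs)
  have hterm : ∀ s, ∀ k j : Fin m, -(|c k j| * P s) ≤ min (φ k s) 0 * (c k j * φ j s) := by
    intro s k j
    have hak : min (φ k s) 0 ≤ 0 := min_le_right _ _
    have hak2 : (min (φ k s) 0)^2 ≤ P s :=
      Finset.single_le_sum (fun l (_ : l ∈ Finset.univ) => sq_nonneg (min (φ l s) 0))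
        (Finset.mem_univ k)
    have haj2 : (min (φ j s) 0)^2 ≤ P s :=
      Finset.single_le_sum (fun l (_ : l ∈ Finset.univ) => sq_nonneg (min (φ l s) 0))
        (Finset.mem_univ j)
    rcases eq_or_ne k j with rfl | hkj
    · rcases le_or_gt 0 (φ k s) with h | h
      · rw [min_eq_right h, zero_mul]
        have := mul_nonneg (abs_nonneg (c k k)) (hP0 s)
        linarith
      · rw [min_eq_left h.le]
        have h1 : 0 ≤ φ k s * (c k k * φ k s) := by nlinarith [hdiag k, sq_nonneg (φ k s)]
        have := mul_nonneg (abs_nonneg (c k k)) (hP0 s)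
        linarith
    · have hc : c k j ≤ 0 := hoff k j hkj
      rcases le_or_gt 0 (φ j s) with h | h
      · have h1 : 0 ≤ min (φ k s) 0 * (c k j * φ j s) := by
          have h5 : c k j * φ j s ≤ 0 := mul_nonpos_of_nonpos_of_nonneg hc h
          nlinarith
        have := mul_nonneg (abs_nonneg (c k j)) (hP0 s)
        linarith
      · have haj : min (φ j s) 0 = φ j s := min_eq_left h.le
        rw [abs_of_nonpos hc]
        rw [← haj]
        nlinarith [sq_nonneg (min (φ k s) 0 - min (φ j s) 0),
          sq_nonneg (min (φ k s) 0 + min (φ j s) 0)]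
  have hPge : ∀ s, -(2 * K0 * P s) ≤ ∑ k, 2 * min (φ k s) 0 * (∑ j, c k j * φ j s) := by
    intro s
    have h1 : ∀ k : Fin m, 2 * min (φ k s) 0 * (∑ j, c k j * φ j s)
        = ∑ j, 2 * (min (φ k s) 0 * (c k j * φ j s)) := by
      intro k
      rw [mul_assoc, Finset.mul_sum, Finset.mul_sum]
    calc -(2 * K0 * P s) = ∑ k : Fin m, ∑ j, 2 * (-(|c k j| * P s)) := by
          have : ∀ k : Fin m, ∑ j, (2:ℝ) * (-(|c k j| * P s))
              = (-(2 * P s)) * ∑ j, |c k j| := by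
            intro k
            rw [Finset.mul_sum]
            exact Finset.sum_congr rfl fun j _ => by ring
          rw [Finset.sum_congr rfl fun k _ => this k, ← Finset.mul_sum, ← hK0def]
          ring
      _ ≤ ∑ k, ∑ j, 2 * (min (φ k s) 0 * (c k j * φ j s)) := by
          apply Finset.sum_le_sum
          intro k _
          apply Finset.sum_le_sum
          intro j _
          have := hterm s k j
          linarith
      _ = ∑ k, 2 * min (φ k s) 0 * (∑ j, c k j * φ j s) := by
          exact (Finset.sum_congr rfl fun k _ => (h1 k).symm)
  have hnn : ∀ k, ∀ s ≤ (0:ℝ), 0 ≤ φ k s := by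
    have hGmono := mono_aux (fun s => Real.exp (2*K0*s) * P s)
      (fun s => Real.exp (2*K0*s) * (2*K0*1) * P s
        + Real.exp (2*K0*s) * (∑ k, 2 * min (φ k s) 0 * (∑ j, c k j * φ j s)))
      (fun s hs => (((Real.hasDerivAt_exp (2*K0*s)).comp s
          ((hasDerivAt_id s).const_mul (2*K0))).mul (hPd s hs)))
      (fun s _ => by
        have h1 := hPge s
        have h2 : (0:ℝ) ≤ Real.exp (2*K0*s) * (2*K0*P s
            + ∑ k, 2 * min (φ k s) 0 * (∑ j, c k j * φ j s)) := by
          apply mul_nonneg (Real.exp_nonneg _)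
          linarith
        calc (0:ℝ) ≤ _ := h2
          _ = _ := by ring)
    have hP00 : P 0 = 0 := by
      apply Finset.sum_eq_zero
      intro k _
      rw [hinit k]
      split_ifs <;> norm_num
    intro k s hs
    have hGs : Real.exp (2*K0*s) * P s ≤ Real.exp (2*K0*0) * P 0 :=
      hGmono (mem_Iic.2 hs) (mem_Iic.2 le_rfl) hs
    rw [hP00, mul_zero] at hGs
    have hPs : P s = 0 := by
      have h1 : 0 ≤ Real.exp (2*K0*s) * P s := mul_nonneg (Real.exp_nonneg _) (hP0 s)
      have h2 : Real.exp (2*K0*s) * P s = 0 := le_antisymm hGs h1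
      rcases mul_eq_zero.1 h2 with h | h
      · exact absurd h (Real.exp_ne_zero _)
      · exact h
    have h3 := (Finset.sum_eq_zero_iff_of_nonneg
      (fun l (_ : l ∈ Finset.univ) => sq_nonneg (min (φ l s) 0))).1 hPs k (Finset.mem_univ k)
    have h4 : min (φ k s) 0 = 0 := by
      have := (pow_eq_zero_iff (two_ne_zero)).1 h3
      exact this
    exact min_eq_right_iff.1 h4
  -- Part C : upper bound
  have hub : ∀ k, ∀ s ≤ (0:ℝ), φ k s ≤ 1 := by
    intro k s hs
    calc φ k s ≤ ∑ j, φ j s :=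
          Finset.single_le_sum (fun j _ => hnn j s hs) (Finset.mem_univ k)
      _ = 1 := hsum s hs
  refine ⟨fun k s hs => ⟨hnn k s hs, hub k s hs⟩, hsum, ?_⟩
  -- Part D : convergence
  obtain ⟨lam, hlam, hgap⟩ := gap_lemma m hm c hoff hirr
  set V : ℝ → ℝ := fun s => ∑ k, (φ k s - 1/(m:ℝ))^2 with hVdef
  set Vd : ℝ → ℝ := fun s => ∑ k, 2 * (φ k s - 1/(m:ℝ)) * (∑ j, c k j * φ j s) with hVddef
  have hVd : ∀ s ≤ (0:ℝ), HasDerivAt V (Vd s) s := by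
    intro s hs
    apply HasDerivAt.fun_sum
    intro k _
    have h := ((hode k s hs).sub_const (1/(m:ℝ))).fun_pow 2
    convert h using 1
    · rfl
    push_cast
    ring
  have hVge : ∀ s ≤ (0:ℝ), lam * V s ≤ Vd s := by
    intro s hs
    set x : Fin m → ℝ := fun k => φ k s - 1/(m:ℝ) with hxdef
    have hx0 : (∑ k, x k) = 0 := by
      simp only [hxdef]
      rw [Finset.sum_sub_distrib, hsum s hs, Finset.sum_const, Finset.card_univ,
        Fintype.card_fin, nsmul_eq_mul]
      field_simp
      norm_num
    have hcx : ∀ k, (∑ j, c k j * x j) = ∑ j, c k j * φ j s := by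
      intro k
      have : ∀ j, c k j * x j = c k j * φ j s - c k j * (1/(m:ℝ)) := by
        intro j; simp only [hxdef]; ring
      rw [Finset.sum_congr rfl fun j _ => this j, Finset.sum_sub_distrib,
        ← Finset.sum_mul, hrow, zero_mul, sub_zero]
    have hVdeq : Vd s = ∑ k, ∑ j, (-(c k j)) * (x k - x j)^2 := by
      rw [key_identity m c hrow hcol x, Finset.mul_sum]
      apply Finset.sum_congr rfl
      intro k _
      rw [hcx k]
      ring
    have := hgap x hx0
    rw [hVdeq]
    exact this
  have hVle : ∀ s ≤ (0:ℝ), V s ≤ V 0 * Real.exp (lam * s) := by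
    have hG2 := mono_aux (fun s => Real.exp (-lam*s) * V s)
      (fun s => Real.exp (-lam*s) * (-lam*1) * V s + Real.exp (-lam*s) * Vd s)
      (fun s hs => (((Real.hasDerivAt_exp (-lam*s)).comp s
          ((hasDerivAt_id s).const_mul (-lam))).mul (hVd s hs)))
      (fun s hs => by
        have h1 := hVge s hs.le
        have h2 : (0:ℝ) ≤ Real.exp (-lam*s) * (Vd s - lam * V s) := by
          apply mul_nonneg (Real.exp_nonneg _)
          linarith
        calc (0:ℝ) ≤ _ := h2
          _ = _ := by ring)
    intro s hs
    have h1 : Real.exp (-lam*s) * V s ≤ Real.exp (-lam*0) * V 0 :=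
      hG2 (mem_Iic.2 hs) (mem_Iic.2 le_rfl) hs
    rw [mul_zero, Real.exp_zero, one_mul] at h1
    have h2 := mul_le_mul_of_nonneg_left h1 (Real.exp_nonneg (lam*s))
    calc V s = Real.exp (lam*s) * (Real.exp (-lam*s) * V s) := by
          rw [← mul_assoc, ← Real.exp_add]
          norm_num
        _ ≤ Real.exp (lam*s) * V 0 := h2
        _ = V 0 * Real.exp (lam*s) := mul_comm _ _
  intro k
  have hb : Tendsto (fun s => V 0 * Real.exp (lam*s)) atBot (nhds 0) := by
    have h1 : Tendsto (fun s : ℝ => lam * s) atBot atBot :=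
      (tendsto_id (α := ℝ)).const_mul_atBot hlam
    have h2 := Real.tendsto_exp_atBot.comp h1
    simpa using h2.const_mul (V 0)
  have hsq : Tendsto (fun s => (φ k s - 1/(m:ℝ))^2) atBot (nhds 0) := by
    apply squeeze_zero' (Eventually.of_forall fun s => sq_nonneg _) _ hb
    filter_upwards [eventually_le_atBot (0:ℝ)] with s hs
    calc (φ k s - 1/(m:ℝ))^2 ≤ V s :=
          Finset.single_le_sum (fun j (_ : j ∈ Finset.univ) => sq_nonneg (φ j s - 1/(m:ℝ)))
            (Finset.mem_univ k)
      _ ≤ V 0 * Real.exp (lam*s) := hVle s hs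
  have habs : Tendsto (fun s => |φ k s - 1/(m:ℝ)|) atBot (nhds 0) := by
    have h := (Real.continuous_sqrt.tendsto 0).comp hsq
    simp only [Function.comp_def, Real.sqrt_sq_eq_abs, Real.sqrt_zero] at h
    exact h
  rw [tendsto_iff_dist_tendsto_zero]
  simpa [Real.dist_eq] using habs
end
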